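/- arXiv:0905.1861 — 2 statements merged into one kernel-verified Lean document; each statement's English description precedes it below -/
import Mathlib

section
/- Fix J ∈ 𝕊 and let D ⊆ L_J be a domain of L_J, symmetric with respect to the real axis (x+yJ ∈ D implies x−yJ ∈ D) and with D ∩ ℝ ≠ ∅. Let Ω_D be the symmetric completion of D. If f : D → L_J is holomorphic, then the function f̃ : Ω_D → ℍ defined by f̃(x+yI) = (1/2)·(f(x+yJ) + f(x−yJ)) + I·(1/2)·(J·(f(x−yJ) − f(x+yJ))) is the unique slice regular extension of f to Ω_D. -/
open Quaternion

noncomputable section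

/-- The 2-sphere of imaginary units in the quaternions. -/
def SpH : Set ℍ[ℝ] := {q | q.re = 0 ∧ ‖q‖ = 1}

/-- The slice (complex plane) `L_I = {x + y I : x, y ∈ ℝ}`. -/
def sliceL (I : ℍ[ℝ]) : Set ℍ[ℝ] := {q | ∃ x y : ℝ, q = (x : ℍ[ℝ]) + y • I}

/-- `f` has continuous partial derivatives on the `I`-slice part of `Ω` and satisfies the
Cauchy–Riemann equation `∂f/∂x + I ∂f/∂y = 0` there. -/
def SliceHolomorphicOn (I : ℍ[ℝ]) (f : ℍ[ℝ] → ℍ[ℝ]) (Ω : Set ℍ[ℝ]) : Prop :=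
  ∃ fx fy : ℝ → ℝ → ℍ[ℝ],
    (∀ x y : ℝ, (x : ℍ[ℝ]) + y • I ∈ Ω →
      HasDerivAt (fun t : ℝ => f ((t : ℍ[ℝ]) + y • I)) (fx x y) x) ∧
    (∀ x y : ℝ, (x : ℍ[ℝ]) + y • I ∈ Ω →
      HasDerivAt (fun t : ℝ => f ((x : ℍ[ℝ]) + t • I)) (fy x y) y) ∧
    ContinuousOn (fun p : ℝ × ℝ => fx p.1 p.2) {p : ℝ × ℝ | (p.1 : ℍ[ℝ]) + p.2 • I ∈ Ω} ∧
    ContinuousOn (fun p : ℝ × ℝ => fy p.1 p.2) {p : ℝ × ℝ | (p.1 : ℍ[ℝ]) + p.2 • I ∈ Ω} ∧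
    ∀ x y : ℝ, (x : ℍ[ℝ]) + y • I ∈ Ω → fx x y + I * fy x y = 0

/-- `f` is slice regular on `Ω`. -/
def SliceRegularOn (f : ℍ[ℝ] → ℍ[ℝ]) (Ω : Set ℍ[ℝ]) : Prop :=
  ∀ I ∈ SpH, SliceHolomorphicOn I f Ω

/-- `Ω` is axially symmetric. -/
def AxSymm (Ω : Set ℍ[ℝ]) : Prop :=
  ∀ (x y : ℝ), ∀ I ∈ SpH, (x : ℍ[ℝ]) + y • I ∈ Ω → ∀ J ∈ SpH, (x : ℍ[ℝ]) + y • J ∈ Ω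

/-- `Ω` is an s-domain: a domain meeting the real axis whose slices are connected. -/
def IsSDomain (Ω : Set ℍ[ℝ]) : Prop :=
  IsOpen Ω ∧ IsConnected Ω ∧ (∃ x : ℝ, (x : ℍ[ℝ]) ∈ Ω) ∧
    ∀ I ∈ SpH, IsConnected (Ω ∩ sliceL I)

/-- The axially symmetric completion of a set `S ⊆ ℍ`. -/
def symmComp (S : Set ℍ[ℝ]) : Set ℍ[ℝ] :=
  {q | ∃ (x y : ℝ) (I : ℍ[ℝ]), I ∈ SpH ∧ q = (x : ℍ[ℝ]) + y • I ∧
    ∃ J ∈ SpH, (x : ℍ[ℝ]) + y • J ∈ S}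

/-- A domain of the slice `L_I`: a nonempty connected relatively open subset of `L_I`. -/
def IsSliceDomain (I : ℍ[ℝ]) (D : Set ℍ[ℝ]) : Prop :=
  D ⊆ sliceL I ∧ IsConnected D ∧ IsOpen {p : ℝ × ℝ | (p.1 : ℍ[ℝ]) + p.2 • I ∈ D}

/-!
On a slice `L_I` the representation formula is a real-linear combination of `f(x + yJ)` and
`f(x - yJ)`, and it turns the Cauchy–Riemann equation of `f` on `L_J` (at `y` and at `-y`) into the
one on `L_I`; this gives slice regularity. Uniqueness is the identity principle on a slice: if `h`
is slice holomorphic on `L_I` and vanishes on the real axis, then for every real functional `ℓ` the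
complex function `x + iy ↦ ℓ(h) - i ℓ(I h)` satisfies the classical Cauchy–Riemann equations and
vanishes on a real interval, so it vanishes on the connected parameter domain; hence so does `h`.
-/

open Set Filter Topology

theorem differentiableOn_of_cauchyRiemann {E : Type*} [NormedAddCommGroup E] [NormedSpace ℂ E]
    {Ψ Ψx Ψy : ℝ → ℝ → E} {U : Set (ℝ × ℝ)} (hU : IsOpen U)
    (hΨx : ∀ p ∈ U, HasDerivAt (Ψ · p.2) (Ψx p.1 p.2) p.1)
    (hΨy : ∀ p ∈ U, HasDerivAt (Ψ p.1 ·) (Ψy p.1 p.2) p.2)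
    (hcx : ContinuousOn ↿Ψx U) (hcy : ContinuousOn ↿Ψy U)
    (hCR : ∀ p ∈ U, Ψy p.1 p.2 = Complex.I • Ψx p.1 p.2) :
    DifferentiableOn ℂ (fun z : ℂ => Ψ z.re z.im) (Complex.equivRealProd ⁻¹' U) := by
  intro z hz
  have hU' : U ∈ 𝓝 (z.re, z.im) := hU.mem_nhds hz
  have hF : HasFDerivAt ↿Ψ ((ContinuousLinearMap.toSpanSingleton ℝ (Ψx z.re z.im)).coprod
      (ContinuousLinearMap.toSpanSingleton ℝ (Ψy z.re z.im))) (z.re, z.im) :=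
    (hasStrictFDerivAt_uncurry_coprod
      (f₁ := fun a b => ContinuousLinearMap.toSpanSingleton ℝ (Ψx a b))
      (f₂ := fun a b => ContinuousLinearMap.toSpanSingleton ℝ (Ψy a b))
      (mem_of_superset hU' fun p hp => (hΨx p hp).hasFDerivAt)
      (mem_of_superset hU' fun p hp => (hΨy p hp).hasFDerivAt)
      (ContinuousLinearMap.toSpanSingletonCLE.continuous.continuousAt.comp
        (hcx.continuousAt hU'))
      (ContinuousLinearMap.toSpanSingletonCLE.continuous.continuousAt.comp
        (hcy.continuousAt hU'))).hasFDerivAt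
  have hFz := hF.comp z Complex.equivRealProdCLM.hasFDerivAt
  refine (hFz.complexOfReal_hasFDerivAt ?_).differentiableAt.differentiableWithinAt
  simpa using hCR _ hz

theorem DifferentiableOn.eqOn_zero_of_forall_ofReal {E : Type*} [NormedAddCommGroup E]
    [NormedSpace ℂ E] [CompleteSpace E] {h : ℂ → E} {U : Set ℂ} (hh : DifferentiableOn ℂ h U)
    (hU : IsOpen U) (hconn : IsPreconnected U) {x₀ : ℝ} (hx₀ : (x₀ : ℂ) ∈ U)
    (hreal : ∀ x : ℝ, (x : ℂ) ∈ U → h x = 0) : EqOn h 0 U := by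
  refine (hh.analyticOnNhd hU).eqOn_zero_of_preconnected_of_frequently_eq_zero hconn hx₀ ?_
  have hnear : ∀ᶠ x : ℝ in 𝓝[≠] x₀, h x = 0 := nhdsWithin_le_nhds <|
    mem_of_superset (Complex.continuous_ofReal.continuousAt.preimage_mem_nhds
      (hU.mem_nhds hx₀)) hreal
  have htend : Tendsto (fun x : ℝ => (x : ℂ)) (𝓝[≠] x₀) (𝓝[≠] (x₀ : ℂ)) :=
    tendsto_nhdsWithin_of_tendsto_nhds_of_eventually_within _
      (Complex.continuous_ofReal.tendsto x₀ |>.mono_left nhdsWithin_le_nhds)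
      (eventually_nhdsWithin_of_forall fun x hx => by simpa using hx)
  exact htend.frequently hnear.frequently

theorem mul_self_of_mem_SpH {I : ℍ[ℝ]} (hI : I ∈ SpH) : I * I = -1 := by
  have := Quaternion.sq_eq_neg_normSq.2 hI.1
  rwa [Quaternion.normSq_eq_norm_mul_self, hI.2, mul_one, Quaternion.coe_one, sq] at this

theorem re_coe_add_smul {I : ℍ[ℝ]} (hI : I.re = 0) (x y : ℝ) : ((x : ℍ[ℝ]) + y • I).re = x := by
  simp [hI]

theorem im_coe_add_smul {I : ℍ[ℝ]} (hI : I.re = 0) (x y : ℝ) :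
    ((x : ℍ[ℝ]) + y • I).im = y • I := by
  ext <;> simp [hI]

theorem norm_smul_of_norm_eq_one {I : ℍ[ℝ]} (hI : ‖I‖ = 1) (y : ℝ) : ‖y • I‖ = |y| := by
  rw [norm_smul, hI, mul_one, Real.norm_eq_abs]

theorem eq_and_abs_eq_of_coe_add_smul_eq {I I' : ℍ[ℝ]} (hI : I ∈ SpH) (hI' : I' ∈ SpH)
    {x y x' y' : ℝ} (h : (x : ℍ[ℝ]) + y • I = (x' : ℍ[ℝ]) + y' • I') : x = x' ∧ |y| = |y'| := by
  have hre := congrArg QuaternionAlgebra.re h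
  have him := congrArg (‖Quaternion.im ·‖) h
  simp only [re_coe_add_smul hI.1, re_coe_add_smul hI'.1, im_coe_add_smul hI.1,
    im_coe_add_smul hI'.1, norm_smul_of_norm_eq_one hI.2, norm_smul_of_norm_eq_one hI'.2] at hre him
  exact ⟨hre, him⟩

def sliceParams (I : ℍ[ℝ]) (Ω : Set ℍ[ℝ]) : Set (ℝ × ℝ) := {p | (p.1 : ℍ[ℝ]) + p.2 • I ∈ Ω}

section SymmetricSliceDomain

variable {J : ℍ[ℝ]} {D : Set ℍ[ℝ]}

theorem coe_add_smul_mem_symmComp_iff (hJ : J ∈ SpH) (hDs : D ⊆ sliceL J)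
    (hsymm : ∀ x y : ℝ, (x : ℍ[ℝ]) + y • J ∈ D → (x : ℍ[ℝ]) - y • J ∈ D)
    {I : ℍ[ℝ]} (hI : I ∈ SpH) {x y : ℝ} :
    (x : ℍ[ℝ]) + y • I ∈ symmComp D ↔ (x : ℍ[ℝ]) + y • J ∈ D := by
  refine ⟨?_, fun h => ⟨x, y, I, hI, rfl, J, hJ, h⟩⟩
  rintro ⟨x', y', I', hI', hq, J', hJ', hmem⟩
  obtain ⟨a, b, hab⟩ := hDs hmem
  obtain ⟨rfl, hy⟩ := eq_and_abs_eq_of_coe_add_smul_eq hI hI' hq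
  obtain ⟨rfl, hy'⟩ := eq_and_abs_eq_of_coe_add_smul_eq hJ' hJ hab
  rw [hab] at hmem
  rcases abs_eq_abs.1 (hy.trans hy') with rfl | rfl
  · exact hmem
  · simpa [sub_eq_add_neg] using hsymm _ _ hmem

theorem coe_mem_symmComp_iff (hJ : J ∈ SpH) (hDs : D ⊆ sliceL J)
    (hsymm : ∀ x y : ℝ, (x : ℍ[ℝ]) + y • J ∈ D → (x : ℍ[ℝ]) - y • J ∈ D) (x : ℝ) :
    (x : ℍ[ℝ]) ∈ symmComp D ↔ (x : ℍ[ℝ]) ∈ D := by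
  simpa using coe_add_smul_mem_symmComp_iff hJ hDs hsymm hJ (x := x) (y := 0)

theorem sliceParams_symmComp (hJ : J ∈ SpH) (hDs : D ⊆ sliceL J)
    (hsymm : ∀ x y : ℝ, (x : ℍ[ℝ]) + y • J ∈ D → (x : ℍ[ℝ]) - y • J ∈ D)
    {I : ℍ[ℝ]} (hI : I ∈ SpH) : sliceParams I (symmComp D) = sliceParams J D :=
  ext fun _ => coe_add_smul_mem_symmComp_iff hJ hDs hsymm hI

theorem isPreconnected_sliceParams (hJ : J ∈ SpH) (hDs : D ⊆ sliceL J) (hD : IsPreconnected D) :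
    IsPreconnected (sliceParams J D) := by
  let e : ℝ × ℝ →ₗ[ℝ] ℍ[ℝ] :=
    (Algebra.linearMap ℝ ℍ[ℝ]).coprod (LinearMap.toSpanSingleton ℝ ℍ[ℝ] J)
  have he : LinearMap.ker e = ⊥ := by
    refine LinearMap.ker_eq_bot'.2 fun p hp => ?_
    have hp : (p.1 : ℍ[ℝ]) + p.2 • J = (0 : ℝ) + (0 : ℝ) • J := by
      rw [Quaternion.coe_zero, zero_smul, add_zero]
      exact hp
    have h0 := eq_and_abs_eq_of_coe_add_smul_eq hJ hJ hp
    exact Prod.ext h0.1 (abs_eq_zero.1 (by simpa using h0.2))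
  have himage : e '' sliceParams J D = D := by
    refine Subset.antisymm (image_subset_iff.2 fun p hp => hp) fun q hq => ?_
    obtain ⟨x, y, rfl⟩ := hDs hq
    exact ⟨(x, y), hq, rfl⟩
  rwa [← (LinearMap.isClosedEmbedding_of_injective he).isInducing.isPreconnected_image, himage]

end SymmetricSliceDomain

theorem SliceHolomorphicOn.sub {I : ℍ[ℝ]} {g h : ℍ[ℝ] → ℍ[ℝ]} {Ω : Set ℍ[ℝ]}
    (hg : SliceHolomorphicOn I g Ω) (hh : SliceHolomorphicOn I h Ω) :
    SliceHolomorphicOn I (g - h) Ω := by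
  obtain ⟨gx, gy, hgx, hgy, hgcx, hgcy, hgCR⟩ := hg
  obtain ⟨hx, hy, hhx, hhy, hhcx, hhcy, hhCR⟩ := hh
  refine ⟨fun x y => gx x y - hx x y, fun x y => gy x y - hy x y,
    fun x y hxy => (hgx x y hxy).sub (hhx x y hxy), fun x y hxy => (hgy x y hxy).sub (hhy x y hxy),
    hgcx.sub hhcx, hgcy.sub hhcy, fun x y hxy => ?_⟩
  rw [mul_sub, sub_add_sub_comm, hgCR x y hxy, hhCR x y hxy, sub_zero]

def complexifyAlong (I : ℍ[ℝ]) (ℓ : StrongDual ℝ ℍ[ℝ]) : ℍ[ℝ] →L[ℝ] ℂ :=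
  Complex.ofRealCLM ∘L ℓ - Complex.I • Complex.ofRealCLM ∘L ℓ ∘L ContinuousLinearMap.mul ℝ ℍ[ℝ] I

theorem re_complexifyAlong (I : ℍ[ℝ]) (ℓ : StrongDual ℝ ℍ[ℝ]) (q : ℍ[ℝ]) :
    (complexifyAlong I ℓ q).re = ℓ q := by
  simp [complexifyAlong]

theorem complexifyAlong_mul_left {I : ℍ[ℝ]} (hI : I * I = -1) (ℓ : StrongDual ℝ ℍ[ℝ])
    (q : ℍ[ℝ]) : complexifyAlong I ℓ (I * q) = Complex.I * complexifyAlong I ℓ q := by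
  simp only [complexifyAlong, sub_apply, smul_apply,
    ContinuousLinearMap.comp_apply, ContinuousLinearMap.mul_apply', ← mul_assoc, hI, neg_one_mul,
    map_neg, Complex.ofRealCLM_apply, smul_eq_mul]
  linear_combination (↑(ℓ (I * q)) : ℂ) * Complex.I_mul_I

theorem SliceHolomorphicOn.eq_zero_of_forall_real_eq_zero {I : ℍ[ℝ]} (hI : I * I = -1)
    {g : ℍ[ℝ] → ℍ[ℝ]} {Ω : Set ℍ[ℝ]} (hg : SliceHolomorphicOn I g Ω)
    (hopen : IsOpen (sliceParams I Ω)) (hconn : IsPreconnected (sliceParams I Ω))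
    {x₀ : ℝ} (hx₀ : (x₀ : ℍ[ℝ]) ∈ Ω) (hreal : ∀ x : ℝ, (x : ℍ[ℝ]) ∈ Ω → g x = 0)
    {x y : ℝ} (hxy : (x : ℍ[ℝ]) + y • I ∈ Ω) : g ((x : ℍ[ℝ]) + y • I) = 0 := by
  obtain ⟨gx, gy, hgx, hgy, hcx, hcy, hCR⟩ := hg
  have hgy_eq {x y : ℝ} (h : (x : ℍ[ℝ]) + y • I ∈ Ω) : gy x y = I * gx x y := by
    have := congrArg (I * ·) (hCR x y h)
    simpa [mul_add, ← mul_assoc, hI, add_neg_eq_zero, eq_comm] using this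
  refine SeparatingDual.eq_zero_of_forall_dual_eq_zero (R := ℝ) fun ℓ => ?_
  set T := complexifyAlong I ℓ
  have hT : DifferentiableOn ℂ (fun z : ℂ => T (g (z.re + z.im • I)))
      (Complex.equivRealProd ⁻¹' sliceParams I Ω) :=
    differentiableOn_of_cauchyRiemann (Ψ := fun a b => T (g (a + b • I)))
      (Ψx := fun a b => T (gx a b)) (Ψy := fun a b => T (gy a b))
      hopen (fun p hp => T.hasFDerivAt.comp_hasDerivAt _ (hgx p.1 p.2 hp))
      (fun p hp => T.hasFDerivAt.comp_hasDerivAt _ (hgy p.1 p.2 hp))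
      (T.continuous.comp_continuousOn hcx) (T.continuous.comp_continuousOn hcy)
      fun p hp => by rw [hgy_eq hp, complexifyAlong_mul_left hI]; rfl
  have hzero := hT.eqOn_zero_of_forall_ofReal
    (hopen.preimage Complex.equivRealProdCLM.continuous)
    (Complex.equivRealProdCLM.toHomeomorph.isPreconnected_preimage.2 hconn)
    (x₀ := x₀) (by simpa [sliceParams] using hx₀)
    (fun t ht => by simp [hreal t (by simpa [sliceParams] using ht)])
    (show ((x : ℂ) + y * Complex.I) ∈ _ by simpa [sliceParams] using hxy)
  simpa [← re_complexifyAlong I ℓ] using congrArg Complex.re hzero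

def representation (J I a b : ℍ[ℝ]) : ℍ[ℝ] :=
  (1 / 2 : ℝ) • (a + b) + I * ((1 / 2 : ℝ) • (J * (b - a)))

/-- `‖q.im‖⁻¹ • q.im` is the imaginary unit of `q` when `q` is not real, and `0` otherwise; at real
points the representation formula does not depend on the unit. -/
def sliceExtension (f : ℍ[ℝ] → ℍ[ℝ]) (J q : ℍ[ℝ]) : ℍ[ℝ] :=
  representation J (‖q.im‖⁻¹ • q.im) (f (q.re + ‖q.im‖ • J)) (f (q.re - ‖q.im‖ • J))

section Representation

variable {J I : ℍ[ℝ]}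

theorem representation_self (a : ℍ[ℝ]) : representation J I a a = a := by
  simp only [representation, sub_self, mul_zero, smul_zero, add_zero, ← two_smul ℝ a, smul_smul]
  norm_num

theorem representation_neg_swap (a b : ℍ[ℝ]) :
    representation J (-I) b a = representation J I a b := by
  simp only [representation, add_comm b, neg_mul, ← mul_neg, ← smul_neg, neg_sub]

theorem representation_same_unit (hJ : J * J = -1) (a b : ℍ[ℝ]) : representation J J a b = a := by
  simp only [representation, mul_smul_comm, ← mul_assoc, hJ, neg_one_mul, smul_neg]
  module

theorem representation_add_mul_representation (hI : I * I = -1) (hJ : J * J = -1)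
    {a a' b b' : ℍ[ℝ]} (ha : a + J * a' = 0) (hb : b - J * b' = 0) :
    representation J I a b + I * representation J I a' b' = 0 := by
  rw [eq_neg_of_add_eq_zero_left ha, sub_eq_zero.1 hb]
  simp only [representation, mul_add, mul_sub, mul_neg, mul_smul_comm, smul_add, smul_sub,
    smul_neg, ← mul_assoc, hI, hJ, one_mul, neg_mul, neg_neg]
  abel

theorem HasDerivAt.representation {u v : ℝ → ℍ[ℝ]} {u' v' : ℍ[ℝ]} {t : ℝ}
    (hu : HasDerivAt u u' t) (hv : HasDerivAt v v' t) :
    HasDerivAt (fun s => representation J I (u s) (v s)) (representation J I u' v') t := by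
  unfold _root_.representation
  exact ((hu.add hv).const_smul (1 / 2 : ℝ)).add
    ((((hv.sub hu).const_mul J).const_smul (1 / 2 : ℝ)).const_mul I)

theorem ContinuousOn.representation {α : Type*} [TopologicalSpace α] {u v : α → ℍ[ℝ]}
    {s : Set α} (hu : ContinuousOn u s) (hv : ContinuousOn v s) :
    ContinuousOn (fun p => representation J I (u p) (v p)) s := by
  unfold _root_.representation
  exact ((hu.add hv).const_smul (1 / 2 : ℝ)).add
    (continuousOn_const.mul ((continuousOn_const.mul (hv.sub hu)).const_smul (1 / 2 : ℝ)))

end Representation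

theorem sliceExtension_coe_add_smul (f : ℍ[ℝ] → ℍ[ℝ]) (J : ℍ[ℝ]) {I : ℍ[ℝ]} (hI : I ∈ SpH)
    (x y : ℝ) :
    sliceExtension f J ((x : ℍ[ℝ]) + y • I) =
      representation J I (f ((x : ℍ[ℝ]) + y • J)) (f ((x : ℍ[ℝ]) - y • J)) := by
  have hpos : ∀ {I : ℍ[ℝ]}, I ∈ SpH → ∀ {y : ℝ}, 0 < y →
      sliceExtension f J ((x : ℍ[ℝ]) + y • I) =
        representation J I (f ((x : ℍ[ℝ]) + y • J)) (f ((x : ℍ[ℝ]) - y • J)) := by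
    intro I hI y hy
    rw [sliceExtension, re_coe_add_smul hI.1, im_coe_add_smul hI.1, norm_smul_of_norm_eq_one hI.2,
      abs_of_pos hy, smul_smul, inv_mul_cancel₀ hy.ne', one_smul]
  rcases lt_trichotomy y 0 with hy | rfl | hy
  · have hneg : -I ∈ SpH := by simpa [SpH] using hI
    have := hpos hneg (neg_pos.2 hy)
    rw [neg_smul_neg, neg_smul, sub_neg_eq_add, ← sub_eq_add_neg] at this
    rw [this, representation_neg_swap]
  · simp [sliceExtension, representation_self]
  · exact hpos hI hy

theorem sliceHolomorphicOn_sliceExtension {J : ℍ[ℝ]} (hJ : J ∈ SpH) {D : Set ℍ[ℝ]}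
    (hDs : D ⊆ sliceL J)
    (hsymm : ∀ x y : ℝ, (x : ℍ[ℝ]) + y • J ∈ D → (x : ℍ[ℝ]) - y • J ∈ D)
    {f : ℍ[ℝ] → ℍ[ℝ]} (hf : SliceHolomorphicOn J f D) {I : ℍ[ℝ]} (hI : I ∈ SpH) :
    SliceHolomorphicOn I (sliceExtension f J) (symmComp D) := by
  obtain ⟨fx, fy, hfx, hfy, hcx, hcy, hCR⟩ := hf
  have hmem {x y : ℝ} : (x : ℍ[ℝ]) + y • I ∈ symmComp D ↔ (x : ℍ[ℝ]) + y • J ∈ D :=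
    coe_add_smul_mem_symmComp_iff hJ hDs hsymm hI
  have hneg {x y : ℝ} (h : (x : ℍ[ℝ]) + y • J ∈ D) : (x : ℍ[ℝ]) + (-y) • J ∈ D := by
    simpa [sub_eq_add_neg] using hsymm x y h
  have hflip : MapsTo (fun p : ℝ × ℝ => (p.1, -p.2)) (sliceParams J D) (sliceParams J D) :=
    fun _ hp => hneg hp
  have hcont_flip : Continuous fun p : ℝ × ℝ => (p.1, -p.2) := by fun_prop
  unfold SliceHolomorphicOn
  simp only [sliceExtension_coe_add_smul f J hI]
  refine ⟨fun x y => representation J I (fx x y) (fx x (-y)),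
    fun x y => representation J I (fy x y) (-fy x (-y)), fun x y h => ?_, fun x y h => ?_,
    ?_, ?_, fun x y h => ?_⟩
  · rw [hmem] at h
    exact (hfx x y h).representation (by simpa [sub_eq_add_neg] using hfx x (-y) (hneg h))
  · rw [hmem] at h
    have hfy' := (hfy x (-y) (hneg h)).scomp y (hasDerivAt_neg y)
    exact (hfy x y h).representation (by simpa [Function.comp_def, sub_eq_add_neg] using hfy')
  · change ContinuousOn _ (sliceParams I (symmComp D))
    rw [sliceParams_symmComp hJ hDs hsymm hI]
    exact hcx.representation (hcx.comp hcont_flip.continuousOn hflip)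
  · change ContinuousOn _ (sliceParams I (symmComp D))
    rw [sliceParams_symmComp hJ hDs hsymm hI]
    exact hcy.representation (hcy.comp hcont_flip.continuousOn hflip).neg
  · rw [hmem] at h
    exact representation_add_mul_representation (mul_self_of_mem_SpH hI)
      (mul_self_of_mem_SpH hJ) (hCR x y h) (by simpa using hCR x (-y) (hneg h))

theorem extension_lemma_general
    (J : ℍ[ℝ]) (hJ : J ∈ SpH)
    (D : Set ℍ[ℝ]) (hD : IsSliceDomain J D)
    (hsymm : ∀ x y : ℝ, (x : ℍ[ℝ]) + y • J ∈ D → (x : ℍ[ℝ]) - y • J ∈ D)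
    (hre : ∃ x : ℝ, (x : ℍ[ℝ]) ∈ D)
    (f : ℍ[ℝ] → ℍ[ℝ]) (hf : SliceHolomorphicOn J f D) :
    ∃ ft : ℍ[ℝ] → ℍ[ℝ],
      SliceRegularOn ft (symmComp D) ∧
      (∀ x y : ℝ, ∀ I ∈ SpH, (x : ℍ[ℝ]) + y • I ∈ symmComp D →
        ft ((x : ℍ[ℝ]) + y • I) =
          (1 / 2 : ℝ) • (f ((x : ℍ[ℝ]) + y • J) + f ((x : ℍ[ℝ]) - y • J)) +
            I * ((1 / 2 : ℝ) • (J * (f ((x : ℍ[ℝ]) - y • J) - f ((x : ℍ[ℝ]) + y • J))))) ∧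
      Set.EqOn ft f D ∧
      ∀ g : ℍ[ℝ] → ℍ[ℝ], SliceRegularOn g (symmComp D) → Set.EqOn g f D →
        Set.EqOn g ft (symmComp D) := by
  obtain ⟨hDs, hDconn, hDopen⟩ := hD
  obtain ⟨x₀, hx₀⟩ := hre
  have hregular : SliceRegularOn (sliceExtension f J) (symmComp D) :=
    fun I hI => sliceHolomorphicOn_sliceExtension hJ hDs hsymm hf hI
  have hext : EqOn (sliceExtension f J) f D := by
    intro q hq
    obtain ⟨x, y, rfl⟩ := hDs hq
    rw [sliceExtension_coe_add_smul f J hJ, representation_same_unit (mul_self_of_mem_SpH hJ)]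
  refine ⟨sliceExtension f J, hregular, fun x y I hI _ => sliceExtension_coe_add_smul f J hI x y,
    hext, fun g hg hgf q hq => ?_⟩
  obtain ⟨x, y, I, hI, rfl, -⟩ := id hq
  have hparams := sliceParams_symmComp hJ hDs hsymm hI
  refine sub_eq_zero.1 <| ((hg I hI).sub (hregular I hI)).eq_zero_of_forall_real_eq_zero
    (mul_self_of_mem_SpH hI) (hparams ▸ hDopen) (hparams ▸ isPreconnected_sliceParams hJ hDs
      hDconn.isPreconnected) ((coe_mem_symmComp_iff hJ hDs hsymm x₀).2 hx₀) (fun t ht => ?_) hq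
  have htD := (coe_mem_symmComp_iff hJ hDs hsymm t).1 ht
  simp [hgf htD, hext htD]

/-- Extension Lemma: a holomorphic function on a symmetric slice domain extends uniquely to a
slice regular function on the symmetric completion, given by the representation formula. -/
theorem extension_lemma
    (J : ℍ[ℝ]) (hJ : J ∈ SpH)
    (D : Set ℍ[ℝ]) (hD : IsSliceDomain J D)
    (hsymm : ∀ x y : ℝ, (x : ℍ[ℝ]) + y • J ∈ D → (x : ℍ[ℝ]) - y • J ∈ D)
    (hre : ∃ x : ℝ, (x : ℍ[ℝ]) ∈ D)
    (f : ℍ[ℝ] → ℍ[ℝ]) (hf : SliceHolomorphicOn J f D) (hfm : Set.MapsTo f D (sliceL J)) :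
    ∃ ft : ℍ[ℝ] → ℍ[ℝ],
      SliceRegularOn ft (symmComp D) ∧
      (∀ x y : ℝ, ∀ I ∈ SpH, (x : ℍ[ℝ]) + y • I ∈ symmComp D →
        ft ((x : ℍ[ℝ]) + y • I) =
          (1 / 2 : ℝ) • (f ((x : ℍ[ℝ]) + y • J) + f ((x : ℍ[ℝ]) - y • J)) +
            I * ((1 / 2 : ℝ) • (J * (f ((x : ℍ[ℝ]) - y • J) - f ((x : ℍ[ℝ]) + y • J))))) ∧
      Set.EqOn ft f D ∧
      ∀ g : ℍ[ℝ] → ℍ[ℝ], SliceRegularOn g (symmComp D) → Set.EqOn g f D →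
        Set.EqOn g ft (symmComp D) :=
  extension_lemma_general J hJ D hD hsymm hre f hf
end
end

section
/- Let f : Ω → ℍ be slice regular on an s-domain Ω, and let Z_f = {q ∈ Ω : f(q) = 0} be its zero set. If there exists I ∈ 𝕊 such that L_I ∩ Z_f has an accumulation point in L_I ∩ Ω, then f ≡ 0 on Ω. -/
open Quaternion

noncomputable section

/-!
Identify the slice `L_I` with `ℂ` through `x + iy ↦ x + yI` and let `ℂ` act on `ℍ` by left
multiplication through this identification. The Cauchy–Riemann equation `∂f/∂x + I ∂f/∂y = 0`
then says exactly that `f` restricted to `L_I` is complex differentiable, hence analytic, and the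
one-variable identity theorem on the connected set `Ω ∩ L_I` gives `f = 0` there. In particular
`f` vanishes on a real interval inside `Ω`; since the real axis lies in every slice, the same
argument gives `f = 0` on every `Ω ∩ L_J`, and these slices cover `Ω`.
-/

open Filter Topology Set

theorem hasFDerivAt_of_cauchyRiemann {E : Type*} [NormedAddCommGroup E] [NormedSpace ℝ E]
    [NormedSpace ℂ E] [IsScalarTower ℝ ℂ E] {F : ℂ → E} {z : ℂ} {a b : E}
    (hF : HasFDerivAt (fun p : ℝ × ℝ => F ⟨p.1, p.2⟩)
      (((1 : ℝ →L[ℝ] ℝ).smulRight a).coprod ((1 : ℝ →L[ℝ] ℝ).smulRight b)) (z.re, z.im))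
    (hab : b = Complex.I • a) :
    HasFDerivAt F ((1 : ℂ →L[ℂ] ℂ).smulRight a) z := by
  have hF' := HasFDerivAt.comp (f := Complex.equivRealProdCLM) z hF
    Complex.equivRealProdCLM.hasFDerivAt
  refine hasFDerivAt_of_restrictScalars ℝ hF' ?_
  ext w
  calc w • a = ((w.re : ℂ) + w.im * Complex.I) • a := by rw [Complex.re_add_im]
    _ = w.re • a + w.im • b := by rw [hab, add_smul, mul_smul, ← Complex.coe_algebraMap,
      algebraMap_smul, algebraMap_smul]

theorem Topology.IsEmbedding.frequently_nhdsNE_of_accPt {X Y : Type*} [TopologicalSpace X]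
    [TopologicalSpace Y] {e : X → Y} (he : IsEmbedding e) {S : Set Y} (hS : S ⊆ range e) {x : X}
    (h : AccPt (e x) (𝓟 S)) : ∃ᶠ z in 𝓝[≠] x, e z ∈ S := by
  rw [accPt_iff_frequently] at h
  rw [frequently_nhdsWithin_iff, he.nhds_eq_comap, frequently_comap]
  refine h.mono fun y ⟨hne, hy⟩ => ?_
  obtain ⟨z, rfl⟩ := hS hy
  exact ⟨z, rfl, hy, fun hzx => hne (hzx ▸ rfl)⟩

variable {I : ℍ[ℝ]} {f : ℍ[ℝ] → ℍ[ℝ]} {Ω : Set ℍ[ℝ]}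

theorem mul_self_eq_neg_one_of_mem_SpH (hI : I ∈ SpH) : I * I = -1 := by
  have hIim : I.im = I := by
    conv_rhs => rw [← Quaternion.re_add_im I, hI.1]
    simp
  have := Quaternion.im_sq (a := I)
  rw [hIim, sq, Quaternion.normSq_eq_norm_mul_self, hI.2] at this
  simpa using this

def sliceEmb (hI : I ∈ SpH) : ℂ →ₐ[ℝ] ℍ[ℝ] :=
  Complex.liftAux I (mul_self_eq_neg_one_of_mem_SpH hI)

theorem sliceEmb_apply (hI : I ∈ SpH) (z : ℂ) : sliceEmb hI z = (z.re : ℍ[ℝ]) + z.im • I :=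
  Complex.liftAux_apply _ _ z

theorem norm_sliceEmb (hI : I ∈ SpH) (z : ℂ) : ‖sliceEmb hI z‖ = ‖z‖ := by
  have hsq : I.imI ^ 2 + I.imJ ^ 2 + I.imK ^ 2 = 1 := by
    have h := Quaternion.normSq_def' I
    rw [Quaternion.normSq_eq_norm_mul_self, hI.2, hI.1] at h
    linarith
  have : Quaternion.normSq (sliceEmb hI z) = Complex.normSq z := by
    rw [sliceEmb_apply, Quaternion.normSq_def', Complex.normSq_apply]
    simp only [re_add, re_coe, re_smul, hI.1, smul_eq_mul, mul_zero, add_zero, imI_add, imI_coe,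
      imI_smul, zero_add, imJ_add, imJ_coe, imJ_smul, imK_add, imK_coe, imK_smul]
    linear_combination z.im ^ 2 * hsq
  rw [Quaternion.normSq_eq_norm_mul_self, Complex.normSq_eq_norm_sq, ← sq] at this
  exact (pow_left_inj₀ (norm_nonneg _) (norm_nonneg _) two_ne_zero).1 this

theorem range_sliceEmb (hI : I ∈ SpH) : range (sliceEmb hI) = sliceL I := by
  ext q
  simp only [mem_range, sliceEmb_apply, sliceL]
  constructor
  · rintro ⟨z, rfl⟩; exact ⟨z.re, z.im, rfl⟩
  · rintro ⟨x, y, rfl⟩; exact ⟨⟨x, y⟩, rfl⟩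

theorem isEmbedding_sliceEmb (hI : I ∈ SpH) : IsEmbedding (sliceEmb hI) :=
  (AddMonoidHomClass.isometry_of_norm _ (norm_sliceEmb hI)).isEmbedding

theorem SliceHolomorphicOn.differentiableOn [NormedSpace ℂ ℍ[ℝ]] [IsScalarTower ℝ ℂ ℍ[ℝ]]
    (hI : I ∈ SpH) (hIsmul : ∀ q : ℍ[ℝ], Complex.I • q = I * q) (hΩ : IsOpen Ω)
    (hf : SliceHolomorphicOn I f Ω) :
    DifferentiableOn ℂ (f ∘ sliceEmb hI) (sliceEmb hI ⁻¹' Ω) := by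
  obtain ⟨fx, fy, hfx, hfy, hfx_cont, hfy_cont, hCR⟩ := hf
  intro z hz
  replace hz : (z.re : ℍ[ℝ]) + z.im • I ∈ Ω := by rwa [← sliceEmb_apply hI]
  have hU : {p : ℝ × ℝ | (p.1 : ℍ[ℝ]) + p.2 • I ∈ Ω} ∈ 𝓝 (z.re, z.im) :=
    (hΩ.preimage ((Quaternion.continuous_coe.comp continuous_fst).add
      (continuous_snd.smul continuous_const))).mem_nhds hz
  have hsmulRight : Continuous fun a : ℍ[ℝ] => (1 : ℝ →L[ℝ] ℝ).smulRight a :=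
    (ContinuousLinearMap.smulRightL ℝ ℝ ℍ[ℝ] 1).continuous
  have hpartials := hasStrictFDerivAt_uncurry_coprod
    (f := fun (x y : ℝ) => f ((x : ℍ[ℝ]) + y • I))
    (f₁ := fun (x y : ℝ) => (1 : ℝ →L[ℝ] ℝ).smulRight (fx x y))
    (f₂ := fun (x y : ℝ) => (1 : ℝ →L[ℝ] ℝ).smulRight (fy x y))
    (Filter.mem_of_superset hU fun v hv => (hfx v.1 v.2 hv).hasFDerivAt)
    (Filter.mem_of_superset hU fun v hv => (hfy v.1 v.2 hv).hasFDerivAt)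
    (hsmulRight.continuousAt.comp (hfx_cont.continuousAt hU))
    (hsmulRight.continuousAt.comp (hfy_cont.continuousAt hU))
  have hfy_eq : fy z.re z.im = I * fx z.re z.im := by
    have h := congrArg (I * ·) (hCR z.re z.im hz)
    simp only [mul_add, ← mul_assoc, mul_self_eq_neg_one_of_mem_SpH hI, neg_one_mul, mul_zero,
      ← sub_eq_add_neg, sub_eq_zero] at h
    exact h.symm
  refine (hasFDerivAt_of_cauchyRiemann (a := fx z.re z.im)
    (b := fy z.re z.im) ?_ ?_).differentiableAt.differentiableWithinAt
  · simp only [Function.comp_apply, sliceEmb_apply]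
    exact hpartials.hasFDerivAt
  · rw [hIsmul, hfy_eq]

theorem SliceHolomorphicOn.eqOn_zero_of_accPt (hI : I ∈ SpH) (hΩ : IsOpen Ω)
    (hf : SliceHolomorphicOn I f Ω) (hconn : IsPreconnected (Ω ∩ sliceL I)) {p : ℍ[ℝ]}
    (hp : p ∈ sliceL I ∩ Ω) (hacc : AccPt p (𝓟 (sliceL I ∩ {q ∈ Ω | f q = 0}))) :
    ∀ q ∈ Ω ∩ sliceL I, f q = 0 := by
  set e := sliceEmb hI
  -- `ℂ` acts on `ℍ` by left multiplication through the slice `L_I`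
  let : Module ℂ ℍ[ℝ] := Module.compHom ℍ[ℝ] e.toRingHom
  let : NormedSpace ℂ ℍ[ℝ] :=
    ⟨fun z q => (norm_mul_le (e z) q).trans_eq (by rw [norm_sliceEmb])⟩
  have : IsScalarTower ℝ ℂ ℍ[ℝ] :=
    ⟨fun r z q => show e (r • z) * q = r • (e z * q) by rw [map_smul, smul_mul_assoc]⟩
  have he := isEmbedding_sliceEmb hI
  have hIsmul (q : ℍ[ℝ]) : Complex.I • q = I * q :=
    show e Complex.I * q = I * q by simp [e, sliceEmb_apply]
  have hanalytic : AnalyticOnNhd ℂ (f ∘ e) (e ⁻¹' Ω) :=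
    (hf.differentiableOn hI hIsmul hΩ).analyticOnNhd (hΩ.preimage he.continuous)
  have hpre : IsPreconnected (e ⁻¹' Ω) := by
    rwa [← he.isInducing.isPreconnected_image, image_preimage_eq_inter_range, range_sliceEmb]
  obtain ⟨z₀, rfl⟩ : p ∈ range e := (range_sliceEmb hI).ge hp.1
  have hfreq :=
    he.frequently_nhdsNE_of_accPt (inter_subset_left.trans (range_sliceEmb hI).ge) hacc
  have hzero := hanalytic.eqOn_zero_of_preconnected_of_frequently_eq_zero hpre hp.2
    (hfreq.mono fun z hz => hz.2.2)
  rintro q ⟨hqΩ, hq⟩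
  obtain ⟨z, rfl⟩ := (range_sliceEmb hI).ge hq
  exact hzero hqΩ

theorem range_coe_subset_sliceL (J : ℍ[ℝ]) : range ((↑) : ℝ → ℍ[ℝ]) ⊆ sliceL J := by
  rintro _ ⟨x, rfl⟩
  exact ⟨x, 0, by simp⟩

theorem accPt_coe_range_inter {x : ℝ} {s : Set ℍ[ℝ]} (hs : s ∈ 𝓝 (x : ℍ[ℝ])) :
    AccPt (x : ℍ[ℝ]) (𝓟 (range ((↑) : ℝ → ℍ[ℝ]) ∩ s)) := by
  rw [accPt_iff_frequently_nhdsNE]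
  have hcoe : Tendsto ((↑) : ℝ → ℍ[ℝ]) (𝓝[≠] x) (𝓝[≠] (x : ℍ[ℝ])) :=
    tendsto_nhdsWithin_of_tendsto_nhds_of_eventually_within _
      ((Quaternion.continuous_coe.tendsto x).mono_left nhdsWithin_le_nhds)
      (eventually_mem_nhdsWithin.mono fun t ht => Quaternion.coe_injective.ne ht)
  refine hcoe.frequently_map _ (fun t ht => ⟨mem_range_self t, ht⟩) ?_
  exact (((Quaternion.continuous_coe.tendsto x).mono_left nhdsWithin_le_nhds).eventually_mem
    hs).frequently

theorem exists_mem_SpH_mem_sliceL (q : ℍ[ℝ]) : ∃ J ∈ SpH, q ∈ sliceL J := by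
  by_cases him : q.im = 0
  · obtain ⟨J, hJ⟩ : SpH.Nonempty := by
      let i : ℍ[ℝ] := ⟨0, 1, 0, 0⟩
      refine ⟨i, rfl, (pow_eq_one_iff_of_nonneg (norm_nonneg _) two_ne_zero).1 ?_⟩
      rw [sq, ← Quaternion.normSq_eq_norm_mul_self, Quaternion.normSq_def']
      norm_num [i]
    refine ⟨J, hJ, q.re, 0, ?_⟩
    rw [zero_smul, add_zero]
    conv_lhs => rw [← Quaternion.re_add_im q, him, add_zero]
  · refine ⟨‖q.im‖⁻¹ • q.im, ⟨by simp, ?_⟩, q.re, ‖q.im‖, ?_⟩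
    · rw [norm_smul, norm_inv, norm_norm, inv_mul_cancel₀ (norm_ne_zero_iff.2 him)]
    · rw [smul_smul, mul_inv_cancel₀ (norm_ne_zero_iff.2 him), one_smul, Quaternion.re_add_im]

/-- Identity Principle for slice regular functions on s-domains. -/
theorem identity_principle
    (Ω : Set ℍ[ℝ]) (hΩ : IsSDomain Ω)
    (f : ℍ[ℝ] → ℍ[ℝ]) (hf : SliceRegularOn f Ω)
    (I : ℍ[ℝ]) (hI : I ∈ SpH)
    (p : ℍ[ℝ]) (hp : p ∈ sliceL I ∩ Ω)
    (hacc : AccPt p (Filter.principal (sliceL I ∩ {q ∈ Ω | f q = 0}))) :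
    ∀ q ∈ Ω, f q = 0 := by
  obtain ⟨hΩo, -, ⟨x₀, hx₀⟩, hslices⟩ := hΩ
  have hslice_zero : ∀ J ∈ SpH, ∀ {p}, p ∈ sliceL J ∩ Ω →
      AccPt p (𝓟 (sliceL J ∩ {q ∈ Ω | f q = 0})) → ∀ q ∈ Ω ∩ sliceL J, f q = 0 :=
    fun J hJ _ hp hacc =>
      (hf J hJ).eqOn_zero_of_accPt hJ hΩo (hslices J hJ).isPreconnected hp hacc
  have hreal_zero : range ((↑) : ℝ → ℍ[ℝ]) ∩ Ω ⊆ {q ∈ Ω | f q = 0} := fun q hq =>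
    ⟨hq.2, hslice_zero I hI hp hacc q ⟨hq.2, range_coe_subset_sliceL I hq.1⟩⟩
  intro q hq
  obtain ⟨J, hJ, hqJ⟩ := exists_mem_SpH_mem_sliceL q
  refine hslice_zero J hJ ⟨range_coe_subset_sliceL J (mem_range_self x₀), hx₀⟩ ?_ q ⟨hq, hqJ⟩
  refine (accPt_coe_range_inter (hΩo.mem_nhds hx₀)).mono (principal_mono.2 ?_)
  exact subset_inter (inter_subset_left.trans (range_coe_subset_sliceL J)) hreal_zero
end
end
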